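/- Let g be a Lorentzian metric on ℝ^{1+n} satisfying condition (1.1) and condition (GH), fix a unit vector ω ∈ ℝ^n and σ ∈ ℝ, let R ≥ 2π + 1, and set A = Σ_{+,σ} ∩ {(t,x) : |x| ≥ R}, K = Σ_{+,σ} ∩ {(t,x) : |x| ≤ R}, and 𝒞 = ℝ × B. Then J⁻(Σ_{+,σ}) = (J⁻_Min(A) ∖ 𝒞) ∪ J⁻(K), where J⁻_Min denotes the causal past with respect to the Minkowski metric g_Min with time orientation ∂_t. -/

import Mathlib

noncomputable section

open Set Filter Topology
open scoped RealInnerProductSpace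

abbrev Evec (n : ℕ) : Type := EuclideanSpace ℝ (Fin n)
abbrev Vec (n : ℕ) : Type := ℝ × Evec n

/-- The Minkowski bilinear form on ℝ^{1+n}. -/
def mink {n : ℕ} (v w : Vec n) : ℝ := -(v.1 * w.1) + ⟪v.2, w.2⟫

/-- A Lorentzian metric on ℝ^{1+n}: a smooth assignment of nondegenerate symmetric
bilinear forms of signature (−,+,…,+). -/
structure LorentzMetric (n : ℕ) where
  g : Vec n → Vec n →L[ℝ] Vec n →L[ℝ] ℝ
  smooth : ContDiff ℝ (⊤ : ℕ∞) g
  symm : ∀ p v w, g p v w = g p w v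
  sig : ∀ p, ∃ L : Vec n ≃ₗ[ℝ] Vec n, ∀ v w, g p v w = mink (L v) (L w)

variable {n : ℕ}

def LorentzMetric.Timelike (M : LorentzMetric n) (p v : Vec n) : Prop := M.g p v v < 0
def LorentzMetric.CausalVec (M : LorentzMetric n) (p v : Vec n) : Prop := v ≠ 0 ∧ M.g p v v ≤ 0
def LorentzMetric.NullVec (M : LorentzMetric n) (p v : Vec n) : Prop := v ≠ 0 ∧ M.g p v v = 0

/-- A time orientation: a smooth everywhere timelike vector field. -/
structure TimeOrientation {n : ℕ} (M : LorentzMetric n) where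
  Z : Vec n → Vec n
  smooth : ContDiff ℝ (⊤ : ℕ∞) Z
  timelike : ∀ p, M.Timelike p (Z p)

def FutureDir (M : LorentzMetric n) (O : TimeOrientation M) (p v : Vec n) : Prop :=
  M.CausalVec p v ∧ M.g p v (O.Z p) < 0

def PastDir (M : LorentzMetric n) (O : TimeOrientation M) (p v : Vec n) : Prop :=
  M.CausalVec p v ∧ 0 < M.g p v (O.Z p)

/-- Condition (1.1): g = g_Min outside ℝ × B̄ and the time orientation is ∂_t there. -/
def Cond11 (M : LorentzMetric n) (O : TimeOrientation M) : Prop :=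
  ∀ p : Vec n, 1 < ‖p.2‖ → (∀ v w, M.g p v w = mink v w) ∧ O.Z p = ((1 : ℝ), (0 : Evec n))

/-- A piecewise smooth curve on [a,b] all of whose one-sided tangent vectors satisfy `Dir`. -/
def PiecewiseDirOn {n : ℕ} (Dir : Vec n → Vec n → Prop) (γ : ℝ → Vec n) (a b : ℝ) : Prop :=
  a < b ∧ ∃ (k : ℕ) (s : Fin (k + 1) → ℝ), s 0 = a ∧ s (Fin.last k) = b ∧ StrictMono s ∧
    ∀ i : Fin k, ContDiffOn ℝ (⊤ : ℕ∞) γ (Icc (s i.castSucc) (s i.succ)) ∧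
      ∀ r ∈ Icc (s i.castSucc) (s i.succ),
        Dir (γ r) (derivWithin γ (Icc (s i.castSucc) (s i.succ)) r)

def FutureCausalOn (M : LorentzMetric n) (O : TimeOrientation M) (γ : ℝ → Vec n) (a b : ℝ) : Prop :=
  PiecewiseDirOn (FutureDir M O) γ a b

def PastCausalOn (M : LorentzMetric n) (O : TimeOrientation M) (γ : ℝ → Vec n) (a b : ℝ) : Prop :=
  PiecewiseDirOn (PastDir M O) γ a b

def FutureTimelikeOn (M : LorentzMetric n) (O : TimeOrientation M) (γ : ℝ → Vec n) (a b : ℝ) : Prop :=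
  PiecewiseDirOn (fun p v => M.Timelike p v ∧ M.g p v (O.Z p) < 0) γ a b

def PastTimelikeOn (M : LorentzMetric n) (O : TimeOrientation M) (γ : ℝ → Vec n) (a b : ℝ) : Prop :=
  PiecewiseDirOn (fun p v => M.Timelike p v ∧ 0 < M.g p v (O.Z p)) γ a b

/-- The causal relation p ≤ q. -/
def CausalLE (M : LorentzMetric n) (O : TimeOrientation M) (p q : Vec n) : Prop :=
  p = q ∨ ∃ (γ : ℝ → Vec n) (a b : ℝ), FutureCausalOn M O γ a b ∧ γ a = p ∧ γ b = q

def Jplus (M : LorentzMetric n) (O : TimeOrientation M) (S : Set (Vec n)) : Set (Vec n) :=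
  {q | ∃ p ∈ S, CausalLE M O p q}

def Jminus (M : LorentzMetric n) (O : TimeOrientation M) (S : Set (Vec n)) : Set (Vec n) :=
  {q | ∃ p ∈ S, CausalLE M O q p}

/-- The filter of approach to an extended real endpoint from the right, within ℝ. -/
def rightLimFilter (a : EReal) : Filter ℝ :=
  Filter.comap (fun r : ℝ => (r : EReal)) (nhdsWithin a (Ioi a))

def leftLimFilter (b : EReal) : Filter ℝ :=
  Filter.comap (fun r : ℝ => (r : EReal)) (nhdsWithin b (Iio b))

/-- The open interval (a,b) of extended reals, as a set of reals. -/
def erealIoo (a b : EReal) : Set ℝ := {r : ℝ | a < (r : EReal) ∧ (r : EReal) < b}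

/-- A (future- or past-directed) timelike curve on the open interval (a,b). -/
def TimelikeCurve (M : LorentzMetric n) (O : TimeOrientation M) (γ : ℝ → Vec n) (a b : EReal) : Prop :=
  a < b ∧ ((∀ c d : ℝ, a < (c : EReal) → (d : EReal) < b → c < d → FutureTimelikeOn M O γ c d) ∨
           (∀ c d : ℝ, a < (c : EReal) → (d : EReal) < b → c < d → PastTimelikeOn M O γ c d))

/-- An inextendible timelike curve: no limit at either endpoint. -/
def InextTimelike (M : LorentzMetric n) (O : TimeOrientation M) (γ : ℝ → Vec n) (a b : EReal) : Prop :=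
  TimelikeCurve M O γ a b ∧ (¬ ∃ L, Tendsto γ (rightLimFilter a) (nhds L)) ∧
    (¬ ∃ L, Tendsto γ (leftLimFilter b) (nhds L))

/-- A Cauchy surface: met exactly once by every inextendible timelike curve. -/
def IsCauchySurface (M : LorentzMetric n) (O : TimeOrientation M) (S : Set (Vec n)) : Prop :=
  ∀ (γ : ℝ → Vec n) (a b : EReal), InextTimelike M O γ a b →
    ∃! r : ℝ, r ∈ erealIoo a b ∧ γ r ∈ S

/-- An inextendible future-directed causal curve. -/
def InextFutureCausal (M : LorentzMetric n) (O : TimeOrientation M) (γ : ℝ → Vec n) (a b : EReal) : Prop :=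
  a < b ∧ (∀ c d : ℝ, a < (c : EReal) → (d : EReal) < b → c < d → FutureCausalOn M O γ c d) ∧
  (¬ ∃ L, Tendsto γ (rightLimFilter a) (nhds L)) ∧ (¬ ∃ L, Tendsto γ (leftLimFilter b) (nhds L))

/-- A Cauchy temporal function. -/
structure CauchyTemporal {n : ℕ} (M : LorentzMetric n) (O : TimeOrientation M) where
  τ : Vec n → ℝ
  smooth : ContDiff ℝ (⊤ : ℕ∞) τ
  surj : Function.Surjective τ
  grad : Vec n → Vec n
  grad_spec : ∀ p w, M.g p (grad p) w = fderiv ℝ τ p w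
  grad_timelike : ∀ p, M.Timelike p (grad p)
  grad_past : ∀ p, PastDir M O p (grad p)
  level_conn : ∀ r : ℝ, IsConnected (τ ⁻¹' {r})
  level_spacelike : ∀ p v, v ≠ (0 : Vec n) → fderiv ℝ τ p v = 0 → 0 < M.g p v v
  level_cauchy : ∀ r : ℝ, IsCauchySurface M O (τ ⁻¹' {r})
  mono : ∀ (γ : ℝ → Vec n) (a b : EReal), InextFutureCausal M O γ a b →
    StrictMonoOn (fun r => τ (γ r)) (erealIoo a b) ∧
      (fun r => τ (γ r)) '' (erealIoo a b) = univ

/-- Condition (GH): no closed causal curves, compact causal diamonds, and existence of a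
Cauchy temporal function. -/
def CondGH (M : LorentzMetric n) (O : TimeOrientation M) : Prop :=
  (¬ ∃ (γ : ℝ → Vec n) (a b : ℝ),
      (FutureCausalOn M O γ a b ∨ PastCausalOn M O γ a b) ∧ γ a = γ b) ∧
  (∀ p q : Vec n, IsCompact (Jplus M O {p} ∩ Jminus M O {q})) ∧
  Nonempty (CauchyTemporal M O)

/-- Geodesic equation on a set, in coordinate-free form equivalent to
γ̈^k + Γ^k_{ij} γ̇^i γ̇^j = 0. -/
def IsGeodesicOn (M : LorentzMetric n) (γ : ℝ → Vec n) (s : Set ℝ) : Prop :=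
  ContDiffOn ℝ (⊤ : ℕ∞) γ s ∧ ∀ r ∈ s, ∀ u : Vec n,
    M.g (γ r) (derivWithin (fun t => derivWithin γ s t) s r) u
      + (fderiv ℝ M.g (γ r)) (derivWithin γ s r) (derivWithin γ s r) u
      - (1 / 2) * ((fderiv ℝ M.g (γ r)) u) (derivWithin γ s r) (derivWithin γ s r) = 0

def SigMinus {n : ℕ} (ω : Evec n) : Set (Vec n) := {p | ⟪p.2, ω⟫ = -1}
def SigPlus {n : ℕ} (ω : Evec n) : Set (Vec n) := {p | ⟪p.2, ω⟫ = 1}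
def SigMinusAt {n : ℕ} (ω : Evec n) (σ : ℝ) : Set (Vec n) := {p | p.1 = σ ∧ ⟪p.2, ω⟫ = -1}
def SigPlusAt {n : ℕ} (ω : Evec n) (σ : ℝ) : Set (Vec n) := {p | p.1 = σ ∧ ⟪p.2, ω⟫ = 1}

/-- The family of maximal geodesics γ_z, z ∈ Σ₋, with γ_z(0) = z, γ̇_z(0) = (1,ω),
defined on (−∞, ρ(z)). -/
structure GeodesicFamily {n : ℕ} (M : LorentzMetric n) (ω : Evec n) where
  ρ : Vec n → EReal
  γ : Vec n → ℝ → Vec n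
  ρ_pos : ∀ z ∈ SigMinus ω, 0 < ρ z
  geo : ∀ z ∈ SigMinus ω, IsGeodesicOn M (γ z) {r : ℝ | (r : EReal) < ρ z}
  init : ∀ z ∈ SigMinus ω, γ z 0 = z
  init' : ∀ z ∈ SigMinus ω, deriv (γ z) 0 = ((1 : ℝ), ω)
  maximal : ∀ z ∈ SigMinus ω, ∀ (b : EReal) (η : ℝ → Vec n),
    IsGeodesicOn M η {r : ℝ | (r : EReal) < b} → η 0 = z → deriv η 0 = ((1 : ℝ), ω) → b ≤ ρ z

/-- The exit time r₊(z) = sup{r < ρ(z) : γ_z([0,r]) ⊆ {x·ω ≤ 1}}. -/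
def exitTime {n : ℕ} {M : LorentzMetric n} {ω : Evec n} (F : GeodesicFamily M ω) (z : Vec n) : EReal :=
  sSup ((fun r : ℝ => (r : EReal)) ''
    {r : ℝ | (r : EReal) < F.ρ z ∧ ∀ s ∈ Icc (0 : ℝ) r, ⟪(F.γ z s).2, ω⟫ ≤ 1})

/-- The trapped set 𝒯_g. -/
def Trapped {n : ℕ} {M : LorentzMetric n} {ω : Evec n} (F : GeodesicFamily M ω) : Set (Vec n) :=
  {z | z ∈ SigMinus ω ∧ exitTime F z = F.ρ z}

/-- The SPW scattering hypothesis for the weight λ. -/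
def SPW {n : ℕ} (M : LorentzMetric n) (ω : Evec n) (F : GeodesicFamily M ω) (lam : Vec n → ℝ) : Prop :=
  ∀ σ : ℝ,
    {p : Vec n × Vec n | ∃ z ∈ SigMinusAt ω σ, z ∉ Trapped F ∧
        p = (F.γ z (exitTime F z).toReal, deriv (F.γ z) (exitTime F z).toReal)}
    = {p : Vec n × Vec n | ∃ w ∈ SigPlusAt ω (σ + 2), p = (w, lam w • ((1 : ℝ), ω))}

/-- A diffeomorphism between subsets of normed spaces. -/
def IsDiffeoOn {X Y : Type*} [NormedAddCommGroup X] [NormedSpace ℝ X]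
    [NormedAddCommGroup Y] [NormedSpace ℝ Y] (F : X → Y) (s : Set X) (t : Set Y) : Prop :=
  ContDiffOn ℝ (⊤ : ℕ∞) F s ∧ Set.BijOn F s t ∧
    ∃ G : Y → X, ContDiffOn ℝ (⊤ : ℕ∞) G t ∧ (∀ x ∈ s, G (F x) = x) ∧ ∀ y ∈ t, F (G y) = y

/-- The eikonal equation g(dφ, dφ) = 0. -/
def Eikonal (M : LorentzMetric n) (φ : Vec n → ℝ) : Prop :=
  ∀ p, ∃ X : Vec n, (∀ w, M.g p X w = fderiv ℝ φ p w) ∧ M.g p X X = 0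

/-- X = (dF)^♯, the g-gradient of F. -/
def IsGGrad (M : LorentzMetric n) (F : Vec n → ℝ) (X : Vec n → Vec n) : Prop :=
  ∀ p w, M.g p (X p) w = fderiv ℝ F p w

/-- Future-directed causal vectors for the Minkowski metric with orientation ∂_t. -/
def MinFutureDir {n : ℕ} (v : Vec n) : Prop := (v ≠ 0 ∧ mink v v ≤ 0) ∧ 0 < v.1

def CausalLEMin {n : ℕ} (p q : Vec n) : Prop :=
  p = q ∨ ∃ (γ : ℝ → Vec n) (a b : ℝ),
    PiecewiseDirOn (fun _ v => MinFutureDir v) γ a b ∧ γ a = p ∧ γ b = q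

/-- Causal past for the Minkowski metric. -/
def JminusMin {n : ℕ} (S : Set (Vec n)) : Set (Vec n) := {q | ∃ p ∈ S, CausalLEMin q p}

/-- The coordinate pairing between covectors (identified with vectors) and vectors. -/
def cdot {n : ℕ} (v w : Vec n) : ℝ := v.1 * w.1 + ⟪v.2, w.2⟫


/-! ### Auxiliary infrastructure: ℕ-indexed piecewise causal curves -/

section AuxPW

variable {Dir Dir₁ Dir₂ : Vec n → Vec n → Prop} {γ γ₁ γ₂ : ℝ → Vec n} {a b m c : ℝ}

/-- ℕ-indexed version of `PiecewiseDirOn`, easier for surgery. -/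
def PW (Dir : Vec n → Vec n → Prop) (γ : ℝ → Vec n) (a b : ℝ) : Prop :=
  a < b ∧ ∃ (k : ℕ) (s : ℕ → ℝ), s 0 = a ∧ s k = b ∧ (∀ i < k, s i < s (i + 1)) ∧
    ∀ i < k, ContDiffOn ℝ (⊤ : ℕ∞) γ (Icc (s i) (s (i + 1))) ∧
      ∀ r ∈ Icc (s i) (s (i + 1)), Dir (γ r) (derivWithin γ (Icc (s i) (s (i + 1))) r)

theorem partition_mono {s : ℕ → ℝ} {k : ℕ} (h : ∀ i < k, s i < s (i + 1)) :
    ∀ i j, i ≤ j → j ≤ k → s i ≤ s j := by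
  intro i j hij hjk
  induction j with
  | zero => simp_all
  | succ j ih =>
    rcases Nat.lt_or_ge i (j+1) with hlt | hge
    · exact le_trans (ih (by omega) (by omega)) (le_of_lt (h j (by omega)))
    · have : i = j + 1 := by omega
      simp [this]

theorem pw_iff_piecewise : PiecewiseDirOn Dir γ a b ↔ PW Dir γ a b := by
  constructor
  · rintro ⟨hab, k, s, h0, hl, hmono, hp⟩
    refine ⟨hab, k, fun i => s ⟨min i k, by omega⟩, by simpa using h0, ?_, ?_, ?_⟩
    · simpa [Fin.last] using hl
    · intro i hi
      have : (⟨min i k, by omega⟩ : Fin (k+1)) < ⟨min (i+1) k, by omega⟩ := by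
        simp [Fin.lt_def]; omega
      exact hmono this
    · intro i hi
      have e1 : (⟨min i k, by omega⟩ : Fin (k+1)) = (⟨i, hi⟩ : Fin k).castSucc := by
        apply Fin.ext; simp; omega
      have e2 : (⟨min (i+1) k, by omega⟩ : Fin (k+1)) = (⟨i, hi⟩ : Fin k).succ := by
        apply Fin.ext; simp; omega
      have hpi := hp ⟨i, hi⟩
      rw [← e1, ← e2] at hpi
      exact hpi
  · rintro ⟨hab, k, s, h0, hl, hmono, hp⟩
    refine ⟨hab, k, fun i => s i.val, by simpa using h0, by simpa [Fin.last] using hl, ?_, ?_⟩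
    · rw [Fin.strictMono_iff_lt_succ]
      intro i; exact hmono i.val i.isLt
    · intro i
      have := hp i.val i.isLt
      simpa [Fin.castSucc, Fin.castAdd, Fin.castLE, Fin.succ] using this

theorem derivWithin_Icc_shrink {c d c' d' r : ℝ} (hsub : Icc c' d' ⊆ Icc c d)
    (hcd' : c' < d') (hr : r ∈ Icc c' d') (hγ : DifferentiableWithinAt ℝ γ (Icc c d) r) :
    derivWithin γ (Icc c' d') r = derivWithin γ (Icc c d) r :=
  (hγ.hasDerivWithinAt.mono hsub).derivWithin (uniqueDiffOn_Icc hcd' r hr)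

theorem PW.lt (h : PW Dir γ a b) : a < b := h.1

/-- Monotone conversion of the direction condition. -/
theorem PW.dir_mono (h : PW Dir₁ γ a b)
    (himp : ∀ r ∈ Icc a b, ∀ v, Dir₁ (γ r) v → Dir₂ (γ r) v) : PW Dir₂ γ a b := by
  obtain ⟨hab, k, s, h0, hl, hmono, hp⟩ := h
  refine ⟨hab, k, s, h0, hl, hmono, fun i hi => ⟨(hp i hi).1, fun r hr => ?_⟩⟩
  have hsub : Icc (s i) (s (i+1)) ⊆ Icc a b := by
    apply Icc_subset_Icc
    · rw [← h0]; exact partition_mono hmono 0 i (by omega) (by omega)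
    · rw [← hl]; exact partition_mono hmono (i+1) k (by omega) le_rfl
  exact himp r (hsub hr) _ ((hp i hi).2 r hr)

theorem PW.continuousOn (h : PW Dir γ a b) : ContinuousOn γ (Icc a b) := by
  obtain ⟨hab, k, s, h0, hl, hmono, hp⟩ := h
  have key : ∀ j ≤ k, ContinuousOn γ (Icc a (s j)) := by
    intro j hj
    induction j with
    | zero =>
      rw [h0]; simp only [Icc_self]
      exact continuousOn_singleton γ a
    | succ j ih =>
      have hj' : j < k := by omega
      have h1 : ContinuousOn γ (Icc a (s j)) := ih (by omega)
      have h2 : ContinuousOn γ (Icc (s j) (s (j+1))) :=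
        ((hp j hj').1.continuousOn)
      have hcov : Icc a (s j) ∪ Icc (s j) (s (j+1)) = Icc a (s (j+1)) := by
        apply Icc_union_Icc_eq_Icc
        · rw [← h0]; exact partition_mono hmono 0 j (by omega) (by omega)
        · exact le_of_lt (hmono j hj')
      rw [← hcov]
      intro x hx
      rcases hx with hx | hx
      · have hA : ContinuousWithinAt γ (Icc (s j) (s (j+1))) x := by
          by_cases hxj : x ∈ Icc (s j) (s (j+1))
          · exact h2 x hxj
          · apply continuousWithinAt_of_notMem_closure
            rwa [isClosed_Icc.closure_eq]
        exact ((h1 x hx).union hA).mono_of_mem_nhdsWithin self_mem_nhdsWithin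
      · have hA : ContinuousWithinAt γ (Icc a (s j)) x := by
          by_cases hxj : x ∈ Icc a (s j)
          · exact h1 x hxj
          · apply continuousWithinAt_of_notMem_closure
            rwa [isClosed_Icc.closure_eq]
        exact (hA.union (h2 x hx)).mono_of_mem_nhdsWithin self_mem_nhdsWithin
  rw [← hl]; exact key k le_rfl

end AuxPW
section AuxPW2

variable {Dir : Vec n → Vec n → Prop} {γ γ₁ γ₂ : ℝ → Vec n} {a b m c : ℝ}

theorem PW.translate (h : PW Dir γ a b) (c : ℝ) :
    PW Dir (fun r => γ (r + c)) (a - c) (b - c) := by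
  obtain ⟨hab, k, s, h0, hl, hmono, hp⟩ := h
  refine ⟨by linarith, k, fun i => s i - c, by show s 0 - c = a - c; rw [h0],
    by show s k - c = b - c; rw [hl], ?_, ?_⟩
  · intro i hi; show s i - c < s (i+1) - c; have := hmono i hi; linarith
  · intro i hi
    obtain ⟨hcd, hdir⟩ := hp i hi
    have hmap : MapsTo (fun r : ℝ => r + c) (Icc (s i - c) (s (i+1) - c)) (Icc (s i) (s (i+1))) := by
      intro r hr
      simp only [mem_Icc] at hr ⊢
      constructor <;> linarith
    constructor
    · exact hcd.comp ((contDiff_id.add contDiff_const).contDiffOn) hmap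
    · intro r hr
      have hr' : r + c ∈ Icc (s i) (s (i+1)) := hmap hr
      have hdiff : DifferentiableWithinAt ℝ γ (Icc (s i) (s (i+1))) (r + c) :=
        (hcd.differentiableOn (by simp)) _ hr'
      have hd : HasDerivWithinAt (fun r : ℝ => γ (r + c))
          (derivWithin γ (Icc (s i) (s (i+1))) (r + c)) (Icc (s i - c) (s (i+1) - c)) r := by
        have h1 : HasDerivWithinAt (fun r : ℝ => r + c) 1 (Icc (s i - c) (s (i+1) - c)) r :=
          ((hasDerivAt_id r).add_const c).hasDerivWithinAt
        have := (hdiff.hasDerivWithinAt).scomp r h1 hmap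
        simpa [Function.comp_def] using this
      rw [hd.derivWithin (uniqueDiffOn_Icc (by have := hmono i hi; linarith) r hr)]
      exact hdir _ hr'

theorem PW.concat (h1 : PW Dir γ₁ a m) (h2 : PW Dir γ₂ m b) (hm : γ₁ m = γ₂ m) :
    PW Dir (fun r => if r ≤ m then γ₁ r else γ₂ r) a b := by
  obtain ⟨ham, k₁, s₁, h10, h1l, h1mono, h1p⟩ := h1
  obtain ⟨hmb, k₂, s₂, h20, h2l, h2mono, h2p⟩ := h2
  set δ : ℝ → Vec n := fun r => if r ≤ m then γ₁ r else γ₂ r with hδ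
  refine ⟨lt_trans ham hmb, k₁ + k₂, fun i => if i ≤ k₁ then s₁ i else s₂ (i - k₁),
    by simp [h10], ?_, ?_, ?_⟩
  · show (if k₁ + k₂ ≤ k₁ then s₁ (k₁ + k₂) else s₂ (k₁ + k₂ - k₁)) = b
    rcases Nat.eq_zero_or_pos k₂ with rfl | hk2
    · exfalso
      have : m = b := by rw [← h20]; exact h2l
      linarith
    · rw [if_neg (by omega), Nat.add_sub_cancel_left]; exact h2l
  · intro i hi
    show (if i ≤ k₁ then s₁ i else s₂ (i - k₁)) < (if i + 1 ≤ k₁ then s₁ (i+1) else s₂ (i + 1 - k₁))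
    rcases Nat.lt_or_ge i k₁ with h | h
    · simp only [if_pos (by omega : i ≤ k₁), if_pos (by omega : i + 1 ≤ k₁)]
      exact h1mono i h
    · rcases Nat.eq_or_lt_of_le h with heq | h'
      · rw [if_pos (by omega : i ≤ k₁), if_neg (by omega : ¬ i + 1 ≤ k₁)]
        have e : i + 1 - k₁ = 1 := by omega
        have e2 : s₁ i = s₂ 0 := by rw [← heq, h1l, h20]
        rw [e, e2]
        exact h2mono 0 (by omega)
      · rw [if_neg (by omega : ¬ i ≤ k₁), if_neg (by omega : ¬ i + 1 ≤ k₁)]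
        have e : i + 1 - k₁ = (i - k₁) + 1 := by omega
        rw [e]
        exact h2mono (i - k₁) (by omega)
  · intro i hi
    show ContDiffOn ℝ (⊤ : ℕ∞) δ (Icc (if i ≤ k₁ then s₁ i else s₂ (i - k₁)) (if i + 1 ≤ k₁ then s₁ (i+1) else s₂ (i + 1 - k₁))) ∧ _
    simp only []
    rcases Nat.lt_or_ge i k₁ with h | h
    · simp only [if_pos (by omega : i ≤ k₁), if_pos (by omega : i + 1 ≤ k₁)]
      obtain ⟨hcd, hdir⟩ := h1p i h
      have hsub : Icc (s₁ i) (s₁ (i+1)) ⊆ Iic m := by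
        intro r hr
        have : s₁ (i+1) ≤ m := by
          rw [← h1l]; exact partition_mono h1mono (i+1) k₁ (by omega) le_rfl
        exact le_trans hr.2 this
      have heq : EqOn δ γ₁ (Icc (s₁ i) (s₁ (i+1))) := by
        intro r hr
        have hrm : r ≤ m := hsub hr
        simp only [hδ]
        rw [if_pos hrm]
      constructor
      · exact hcd.congr heq
      · intro r hr
        rw [derivWithin_congr heq (heq hr)]
        have := hdir r hr
        rwa [heq hr]
    · simp only [if_neg (by omega : ¬ i + 1 ≤ k₁)]
      have hik : i - k₁ < k₂ := by omega
      obtain ⟨hcd, hdir⟩ := h2p (i - k₁) hik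
      have e : (if i ≤ k₁ then s₁ i else s₂ (i - k₁)) = s₂ (i - k₁) := by
        rcases Nat.eq_or_lt_of_le h with heq | h'
        · rw [if_pos (by omega : i ≤ k₁)]
          have e0 : i - k₁ = 0 := by omega
          rw [e0, h20, ← heq]
          exact h1l
        · rw [if_neg (by omega : ¬ i ≤ k₁)]
      rw [e]
      have e2 : i + 1 - k₁ = (i - k₁) + 1 := by omega
      rw [e2]
      have hge : ∀ r ∈ Icc (s₂ (i - k₁)) (s₂ (i - k₁ + 1)), m ≤ r := by
        intro r hr
        have : m ≤ s₂ (i - k₁) := by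
          rw [← h20]; exact partition_mono h2mono 0 (i - k₁) (by omega) (by omega)
        linarith [hr.1]
      have heq : EqOn δ γ₂ (Icc (s₂ (i - k₁)) (s₂ (i - k₁ + 1))) := by
        intro r hr
        simp only [hδ]
        rcases lt_or_eq_of_le (hge r hr) with h' | h'
        · rw [if_neg (by linarith)]
        · rw [← h', if_pos le_rfl]
          exact hm
      constructor
      · exact hcd.congr heq
      · intro r hr
        rw [derivWithin_congr heq (heq hr)]
        have := hdir r hr
        rwa [heq hr]

end AuxPW2
section AuxPW3

variable {Dir : Vec n → Vec n → Prop} {γ : ℝ → Vec n} {a b m : ℝ}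

theorem PW.split_left (h : PW Dir γ a b) (ham : a < m) (hmb : m ≤ b) : PW Dir γ a m := by
  rcases eq_or_lt_of_le hmb with rfl | hmb'
  · exact h
  obtain ⟨hab, k, s, h0, hl, hmono, hp⟩ := h
  classical
  have hP0 : s 0 < m := by rw [h0]; exact ham
  obtain ⟨j, hjk, hPj, hnext⟩ : ∃ j, j < k ∧ s j < m ∧ m ≤ s (j + 1) := by
    refine ⟨Nat.findGreatest (fun i => s i < m) k, ?_, ?_, ?_⟩
    · rcases eq_or_lt_of_le (Nat.findGreatest_le (P := fun i => s i < m) k) with heq | h'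
      · exfalso
        have := Nat.findGreatest_spec (P := fun i => s i < m) (Nat.zero_le k) hP0
        rw [heq, hl] at this; linarith
      · exact h'
    · exact Nat.findGreatest_spec (P := fun i => s i < m) (Nat.zero_le k) hP0
    · by_contra hc
      push_neg at hc
      have hlt : Nat.findGreatest (fun i => s i < m) k < Nat.findGreatest (fun i => s i < m) k + 1 :=
        Nat.lt_succ_self _
      have hle : Nat.findGreatest (fun i => s i < m) k + 1 ≤ k := by
        rcases eq_or_lt_of_le (Nat.findGreatest_le (P := fun i => s i < m) k) with heq | h'
        · exfalso
          have := Nat.findGreatest_spec (P := fun i => s i < m) (Nat.zero_le k) hP0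
          rw [heq, hl] at this; linarith
        · omega
      exact Nat.findGreatest_is_greatest hlt hle hc
  refine ⟨ham, j + 1, fun i => if i ≤ j then s i else m, by beta_reduce; rw [if_pos (Nat.zero_le j)]; exact h0,
    by beta_reduce; rw [if_neg (by omega)], ?_, ?_⟩
  · intro i hi
    beta_reduce
    rcases Nat.lt_or_ge i j with h' | h'
    · rw [if_pos (by omega), if_pos (by omega)]
      exact hmono i (by omega)
    · have hij : i = j := by omega
      subst hij
      rw [if_pos le_rfl, if_neg (by omega)]
      exact hPj
  · intro i hi
    beta_reduce
    rcases Nat.lt_or_ge i j with h' | h'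
    · rw [if_pos (by omega), if_pos (by omega)]
      exact hp i (by omega)
    · have hij : i = j := by omega
      subst hij
      rw [if_pos le_rfl, if_neg (by omega)]
      obtain ⟨hcd, hdir⟩ := hp i (by omega)
      have hsub : Icc (s i) m ⊆ Icc (s i) (s (i + 1)) := Icc_subset_Icc le_rfl hnext
      refine ⟨hcd.mono hsub, fun r hr => ?_⟩
      rw [derivWithin_Icc_shrink hsub hPj hr ((hcd.differentiableOn (by simp)) r (hsub hr))]
      exact hdir r (hsub hr)

theorem PW.split_right (h : PW Dir γ a b) (ham : a ≤ m) (hmb : m < b) : PW Dir γ m b := by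
  rcases eq_or_lt_of_le ham with rfl | ham'
  · exact h
  obtain ⟨hab, k, s, h0, hl, hmono, hp⟩ := h
  classical
  have hP0 : s 0 < m := by rw [h0]; exact ham'
  obtain ⟨j, hjk, hPj, hnext⟩ : ∃ j, j < k ∧ s j < m ∧ m ≤ s (j + 1) := by
    refine ⟨Nat.findGreatest (fun i => s i < m) k, ?_, ?_, ?_⟩
    · rcases eq_or_lt_of_le (Nat.findGreatest_le (P := fun i => s i < m) k) with heq | h'
      · exfalso
        have := Nat.findGreatest_spec (P := fun i => s i < m) (Nat.zero_le k) hP0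
        rw [heq, hl] at this; linarith
      · exact h'
    · exact Nat.findGreatest_spec (P := fun i => s i < m) (Nat.zero_le k) hP0
    · by_contra hc
      push_neg at hc
      have hlt : Nat.findGreatest (fun i => s i < m) k < Nat.findGreatest (fun i => s i < m) k + 1 :=
        Nat.lt_succ_self _
      have hle : Nat.findGreatest (fun i => s i < m) k + 1 ≤ k := by
        rcases eq_or_lt_of_le (Nat.findGreatest_le (P := fun i => s i < m) k) with heq | h'
        · exfalso
          have := Nat.findGreatest_spec (P := fun i => s i < m) (Nat.zero_le k) hP0
          rw [heq, hl] at this; linarith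
        · omega
      exact Nat.findGreatest_is_greatest hlt hle hc
  rcases eq_or_lt_of_le hnext with heq | hlt
  · -- m = s (j+1) : reindex starting from j+1
    refine ⟨hmb, k - (j + 1), fun i => s (i + (j + 1)), by beta_reduce; rw [Nat.zero_add]; exact heq.symm,
      ?_, ?_, ?_⟩
    · beta_reduce
      have e : k - (j + 1) + (j + 1) = k := by omega
      rw [e]; exact hl
    · intro i hi
      beta_reduce
      have e : i + 1 + (j + 1) = i + (j + 1) + 1 := by omega
      rw [e]
      exact hmono (i + (j + 1)) (by omega)
    · intro i hi
      beta_reduce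
      have e : i + 1 + (j + 1) = i + (j + 1) + 1 := by omega
      rw [e]
      exact hp (i + (j + 1)) (by omega)
  · -- s j < m < s (j+1) : first piece is [m, s (j+1)]
    refine ⟨hmb, k - j, fun i => if i = 0 then m else s (i + j), by beta_reduce; rw [if_pos rfl], ?_, ?_, ?_⟩
    · beta_reduce
      rw [if_neg (by omega)]
      have e : k - j + j = k := by omega
      rw [e]; exact hl
    · intro i hi
      beta_reduce
      rcases Nat.eq_zero_or_pos i with rfl | hpos
      · rw [if_pos rfl, if_neg (by omega)]
        have e : 0 + 1 + j = j + 1 := by omega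
        rw [e]; exact hlt
      · rw [if_neg (by omega), if_neg (by omega)]
        have e : i + 1 + j = i + j + 1 := by omega
        rw [e]; exact hmono (i + j) (by omega)
    · intro i hi
      beta_reduce
      rcases Nat.eq_zero_or_pos i with rfl | hpos
      · rw [if_pos rfl, if_neg (by omega)]
        have e : 0 + 1 + j = j + 1 := by omega
        rw [e]
        obtain ⟨hcd, hdir⟩ := hp j (by omega)
        have hsub : Icc m (s (j + 1)) ⊆ Icc (s j) (s (j + 1)) :=
          Icc_subset_Icc (le_of_lt hPj) le_rfl
        refine ⟨hcd.mono hsub, fun r hr => ?_⟩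
        rw [derivWithin_Icc_shrink hsub hlt hr ((hcd.differentiableOn (by simp)) r (hsub hr))]
        exact hdir r (hsub hr)
      · rw [if_neg (by omega), if_neg (by omega)]
        have e : i + 1 + j = i + j + 1 := by omega
        rw [e]; exact hp (i + j) (by omega)

end AuxPW3
section AuxMetric

variable {M : LorentzMetric n} {O : TimeOrientation M}

/-- Cond11 extends to the closed region `1 ≤ ‖x‖` by continuity. -/
theorem cond11_closed (h11 : Cond11 M O) (p : Vec n) (hp : 1 ≤ ‖p.2‖) :
    (∀ v w, M.g p v w = mink v w) ∧ O.Z p = ((1 : ℝ), (0 : Evec n)) := by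
  rcases lt_or_eq_of_le hp with h | h
  · exact h11 p h
  · -- ‖p.2‖ = 1 : approach from outside
    have hq : ∀ s : ℝ, s ∈ Ioi (1:ℝ) → 1 < ‖(( p.1, s • p.2) : Vec n).2‖ := by
      intro s hs
      have hs0 : (0:ℝ) < s := lt_trans zero_lt_one hs
      simp only [norm_smul, Real.norm_eq_abs, abs_of_pos hs0, ← h]
      rw [mul_one]
      exact mem_Ioi.mp hs
    have hcurve : Continuous (fun s : ℝ => ((p.1, s • p.2) : Vec n)) :=
      continuous_const.prodMk (continuous_id.smul continuous_const)
    have hlim : Tendsto (fun s : ℝ => ((p.1, s • p.2) : Vec n)) (nhdsWithin 1 (Ioi 1)) (nhds p) := by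
      have : Tendsto (fun s : ℝ => ((p.1, s • p.2) : Vec n)) (nhds 1) (nhds (p.1, (1:ℝ) • p.2)) :=
        hcurve.continuousAt.tendsto
      rw [one_smul] at this
      exact this.mono_left nhdsWithin_le_nhds
    constructor
    · intro v w
      have hgcont : Continuous (fun q : Vec n => M.g q v w) :=
        ((M.smooth.continuous.clm_apply continuous_const).clm_apply continuous_const)
      have h1 : Tendsto (fun s : ℝ => M.g (p.1, s • p.2) v w) (nhdsWithin 1 (Ioi 1))
          (nhds (M.g p v w)) := (hgcont.continuousAt.tendsto.comp hlim)
      have h2 : Tendsto (fun s : ℝ => M.g (p.1, s • p.2) v w) (nhdsWithin 1 (Ioi 1))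
          (nhds (mink v w)) := by
        apply Tendsto.congr' _ tendsto_const_nhds
        filter_upwards [self_mem_nhdsWithin] with s hs
        exact ((h11 _ (hq s hs)).1 v w).symm
      exact tendsto_nhds_unique h1 h2
    · have hZcont : Continuous O.Z := O.smooth.continuous
      have h1 : Tendsto (fun s : ℝ => O.Z (p.1, s • p.2)) (nhdsWithin 1 (Ioi 1))
          (nhds (O.Z p)) := (hZcont.continuousAt.tendsto.comp hlim)
      have h2 : Tendsto (fun s : ℝ => O.Z (p.1, s • p.2)) (nhdsWithin 1 (Ioi 1))
          (nhds ((1 : ℝ), (0 : Evec n))) := by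
        apply Tendsto.congr' _ tendsto_const_nhds
        filter_upwards [self_mem_nhdsWithin] with s hs
        exact ((h11 _ (hq s hs)).2).symm
      exact tendsto_nhds_unique h1 h2

theorem futureDir_iff_min (h11 : Cond11 M O) {p : Vec n} (hp : 1 ≤ ‖p.2‖) (v : Vec n) :
    FutureDir M O p v ↔ MinFutureDir v := by
  obtain ⟨hg, hZ⟩ := cond11_closed h11 p hp
  unfold FutureDir MinFutureDir LorentzMetric.CausalVec
  rw [hg, hZ, hg]
  have : mink v ((1 : ℝ), (0 : Evec n)) = -v.1 := by
    simp [mink]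
  rw [this]
  constructor
  · rintro ⟨h1, h2⟩; exact ⟨h1, by linarith⟩
  · rintro ⟨h1, h2⟩; exact ⟨h1, by linarith⟩

/-- Transitivity of `CausalLE`. -/
theorem causalLE_trans {p q r : Vec n} (h1 : CausalLE M O p q) (h2 : CausalLE M O q r) :
    CausalLE M O p r := by
  rcases h1 with rfl | ⟨γ₁, a₁, b₁, hpw1, ha1, hb1⟩
  · exact h2
  rcases h2 with rfl | ⟨γ₂, a₂, b₂, hpw2, ha2, hb2⟩
  · exact Or.inr ⟨γ₁, a₁, b₁, hpw1, ha1, hb1⟩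
  replace hpw1 : PW (FutureDir M O) γ₁ a₁ b₁ := pw_iff_piecewise.mp hpw1
  replace hpw2 : PW (FutureDir M O) γ₂ a₂ b₂ := pw_iff_piecewise.mp hpw2
  have hpw2' : PW (FutureDir M O) (fun r => γ₂ (r + (a₂ - b₁))) (b₁) (b₂ - (a₂ - b₁)) := by
    have := hpw2.translate (a₂ - b₁)
    have e : a₂ - (a₂ - b₁) = b₁ := by ring
    rwa [e] at this
  have hglue : γ₁ b₁ = γ₂ (b₁ + (a₂ - b₁)) := by
    have e : b₁ + (a₂ - b₁) = a₂ := by ring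
    rw [e, ha2, hb1]
  have hcat := hpw1.concat hpw2' hglue
  refine Or.inr ⟨_, a₁, b₂ - (a₂ - b₁), pw_iff_piecewise.mpr hcat, ?_, ?_⟩
  · have : a₁ ≤ b₁ := le_of_lt hpw1.lt
    beta_reduce
    rw [if_pos this]
    exact ha1
  · beta_reduce
    rw [if_neg (by push_neg; exact hpw2'.lt)]
    have e : b₂ - (a₂ - b₁) + (a₂ - b₁) = b₂ := by ring
    rw [e]; exact hb2

theorem causalLE_of_pw {p q : Vec n} {γ : ℝ → Vec n} {a b : ℝ}
    (h : PW (FutureDir M O) γ a b) (ha : γ a = p) (hb : γ b = q) : CausalLE M O p q :=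
  Or.inr ⟨γ, a, b, pw_iff_piecewise.mpr h, ha, hb⟩

theorem causalLEMin_of_pw {p q : Vec n} {γ : ℝ → Vec n} {a b : ℝ}
    (h : PW (fun _ v => MinFutureDir v) γ a b) (ha : γ a = p) (hb : γ b = q) : CausalLEMin p q :=
  Or.inr ⟨γ, a, b, pw_iff_piecewise.mpr h, ha, hb⟩

end AuxMetric
section AuxDisp

variable {γ : ℝ → Vec n} {a b : ℝ}

/-- Along a piecewise Minkowski-causal future curve, `t(b) - t(a)` dominates
`⟪x(b) - x(a), y⟫` for every unit covector `y`. -/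
theorem min_disp_inner (h : PW (fun _ v => MinFutureDir v) γ a b)
    (y : Evec n) (hy : ‖y‖ ≤ 1) :
    (γ a).1 - ⟪(γ a).2, y⟫ ≤ (γ b).1 - ⟪(γ b).2, y⟫ := by
  obtain ⟨hab, k, s, h0, hl, hmono, hp⟩ := h
  set F : Vec n →L[ℝ] ℝ :=
    (ContinuousLinearMap.fst ℝ ℝ (Evec n)) -
      ((innerSL ℝ y).comp (ContinuousLinearMap.snd ℝ ℝ (Evec n))) with hF
  have hFval : ∀ v : Vec n, F v = v.1 - ⟪v.2, y⟫ := by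
    intro v
    simp [hF, real_inner_comm, mul_comm]
  have hFnonneg : ∀ v : Vec n, MinFutureDir v → 0 ≤ F v := by
    intro v hv
    rw [hFval]
    obtain ⟨⟨hne, hmm⟩, hpos⟩ := hv
    have h2 : ⟪v.2, v.2⟫ ≤ v.1 * v.1 := by
      have : mink v v = -(v.1 * v.1) + ⟪v.2, v.2⟫ := rfl
      linarith [hmm, this ▸ hmm]
    have hn2 : ‖v.2‖ ^ 2 ≤ v.1 ^ 2 := by
      rw [← real_inner_self_eq_norm_sq]; nlinarith
    have hn : ‖v.2‖ ≤ v.1 := by nlinarith [norm_nonneg v.2]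
    have hinner : ⟪v.2, y⟫ ≤ ‖v.2‖ := by
      calc ⟪v.2, y⟫ ≤ ‖v.2‖ * ‖y‖ := real_inner_le_norm _ _
      _ ≤ ‖v.2‖ * 1 := by
          exact mul_le_mul_of_nonneg_left hy (norm_nonneg _)
      _ = ‖v.2‖ := mul_one _
    linarith
  -- per-piece monotonicity of F ∘ γ
  have hmonoF : ∀ i < k, MonotoneOn (fun r => F (γ r)) (Icc (s i) (s (i + 1))) := by
    intro i hi
    obtain ⟨hcd, hdir⟩ := hp i hi
    have hsi : s i < s (i + 1) := hmono i hi
    apply monotoneOn_of_deriv_nonneg (convex_Icc _ _)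
    · exact F.continuous.comp_continuousOn hcd.continuousOn
    · intro r hr
      rw [interior_Icc] at hr
      have hmem : Icc (s i) (s (i + 1)) ∈ nhds r := Icc_mem_nhds hr.1 hr.2
      have hdiff : DifferentiableAt ℝ γ r :=
        ((hcd.differentiableOn (by simp)) r (Ioo_subset_Icc_self hr)).differentiableAt hmem
      exact ((F.hasFDerivAt.comp_hasDerivAt r hdiff.hasDerivAt).differentiableAt).differentiableWithinAt
    · intro r hr
      rw [interior_Icc] at hr
      have hmem : Icc (s i) (s (i + 1)) ∈ nhds r := Icc_mem_nhds hr.1 hr.2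
      have hdiff : DifferentiableAt ℝ γ r :=
        ((hcd.differentiableOn (by simp)) r (Ioo_subset_Icc_self hr)).differentiableAt hmem
      have hd : deriv (fun r => F (γ r)) r = F (deriv γ r) :=
        (F.hasFDerivAt.comp_hasDerivAt r hdiff.hasDerivAt).deriv
      rw [hd]
      apply hFnonneg
      have : derivWithin γ (Icc (s i) (s (i + 1))) r = deriv γ r := derivWithin_of_mem_nhds hmem
      rw [← this]
      exact hdir r (Ioo_subset_Icc_self hr)
  have key : ∀ i ≤ k, F (γ (s 0)) ≤ F (γ (s i)) := by
    intro i hik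
    induction i with
    | zero => exact le_rfl
    | succ i ih =>
      have hi : i < k := by omega
      refine le_trans (ih (by omega)) ?_
      exact hmonoF i hi ⟨le_rfl, le_of_lt (hmono i hi)⟩
        ⟨le_of_lt (hmono i hi), le_rfl⟩ (le_of_lt (hmono i hi))
  have := key k le_rfl
  rw [h0, hl] at this
  rw [hFval, hFval] at this
  exact this

theorem min_disp (h : PW (fun _ v => MinFutureDir v) γ a b) :
    ‖(γ b).2 - (γ a).2‖ ≤ (γ b).1 - (γ a).1 := by
  set d := (γ b).2 - (γ a).2 with hd
  rcases eq_or_ne d 0 with h0 | h0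
  · have := min_disp_inner h 0 (by simp)
    simp only [inner_zero_right, sub_zero] at this
    rw [h0]
    simpa using this
  · have hnorm : (0:ℝ) < ‖d‖ := norm_pos_iff.mpr h0
    have := min_disp_inner h (‖d‖⁻¹ • d) (by
      rw [norm_smul, norm_inv, norm_norm]
      rw [inv_mul_cancel₀ (ne_of_gt hnorm)])
    have e1 : ⟪(γ b).2, ‖d‖⁻¹ • d⟫ - ⟪(γ a).2, ‖d‖⁻¹ • d⟫ = ‖d‖⁻¹ * ⟪d, d⟫ := by
      rw [real_inner_smul_right, real_inner_smul_right, ← mul_sub, ← inner_sub_left]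
    have e2 : ‖d‖⁻¹ * ⟪d, d⟫ = ‖d‖ := by
      rw [real_inner_self_eq_norm_sq]
      field_simp
    nlinarith [this, e1, e2]

theorem min_fst_mono (h : PW (fun _ v => MinFutureDir v) γ a b) : (γ a).1 ≤ (γ b).1 := by
  have := min_disp_inner h 0 (by simp)
  simpa using this

end AuxDisp
section AuxSeg

variable {M : LorentzMetric n} {O : TimeOrientation M}

/-- The straight segment from `p` to `w`, parametrized on `[0,1]`. -/
def segC (p w : Vec n) : ℝ → Vec n :=
  fun r => (p.1 + r * (w.1 - p.1), p.2 + r • (w.2 - p.2))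

theorem segC_zero (p w : Vec n) : segC p w 0 = p := by
  simp [segC]

theorem segC_one (p w : Vec n) : segC p w 1 = w := by
  simp [segC]

theorem segC_hasDerivAt (p w : Vec n) (r : ℝ) :
    HasDerivAt (segC p w) ((w.1 - p.1, w.2 - p.2) : Vec n) r := by
  apply HasDerivAt.prodMk
  · simpa using ((hasDerivAt_mul_const (w.1 - p.1)).const_add p.1)
  · have h : HasDerivAt (fun r : ℝ => r • (w.2 - p.2)) ((1:ℝ) • (w.2 - p.2)) r :=
      (hasDerivAt_id r).smul_const _
    simpa using h.const_add p.2

theorem pw_segC {p w : Vec n} (ht : p.1 < w.1) (hx : ‖w.2 - p.2‖ ≤ w.1 - p.1) :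
    PW (fun _ v => MinFutureDir (n := n) v) (segC p w) 0 1 := by
  have hdir : MinFutureDir ((w.1 - p.1, w.2 - p.2) : Vec n) := by
    refine ⟨⟨?_, ?_⟩, by simpa using ht⟩
    · intro hz
      have : w.1 - p.1 = 0 := congrArg Prod.fst hz
      linarith
    · show -((w.1 - p.1) * (w.1 - p.1)) + ⟪w.2 - p.2, w.2 - p.2⟫ ≤ 0
      have : ⟪w.2 - p.2, w.2 - p.2⟫ = ‖w.2 - p.2‖ ^ 2 := real_inner_self_eq_norm_sq _
      nlinarith [norm_nonneg (w.2 - p.2)]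
  have hcd : ContDiff ℝ (⊤ : ℕ∞) (segC p w) := by
    apply ContDiff.prodMk
    · exact contDiff_const.add (contDiff_id.mul contDiff_const)
    · exact contDiff_const.add (contDiff_id.smul contDiff_const)
  refine ⟨zero_lt_one, 1, fun i => if i = 0 then 0 else 1, by simp, by simp, ?_, ?_⟩
  · intro i hi
    have : i = 0 := by omega
    subst this
    simp
  · intro i hi
    have : i = 0 := by omega
    subst this
    beta_reduce
    rw [if_pos rfl, if_neg (by omega)]
    refine ⟨hcd.contDiffOn, fun r hr => ?_⟩
    rw [(segC_hasDerivAt p w r).hasDerivWithinAt.derivWithin (uniqueDiffOn_Icc zero_lt_one r hr)]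
    exact hdir

theorem causalLE_segment (h11 : Cond11 M O) {p w : Vec n} (ht : p.1 < w.1)
    (hx : ‖w.2 - p.2‖ ≤ w.1 - p.1)
    (hout : ∀ r ∈ Icc (0:ℝ) 1, 1 ≤ ‖p.2 + r • (w.2 - p.2)‖) :
    CausalLE M O p w := by
  have himp : ∀ r ∈ Icc (0:ℝ) 1, ∀ v : Vec n, MinFutureDir v → FutureDir M O (segC p w r) v := by
    intro r hr v hv
    have hn1 : 1 ≤ ‖(segC p w r).2‖ := hout r hr
    exact (futureDir_iff_min h11 hn1 v).mpr hv
  have hpw : PW (FutureDir M O) (segC p w) 0 1 := (pw_segC ht hx).dir_mono himp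
  exact causalLE_of_pw hpw (segC_zero p w) (segC_one p w)

/-- A unit vector orthogonal to `ω` with nonnegative inner product against a given vector. -/
theorem exists_unit_orth (hn : 2 ≤ n) {ω : Evec n} (hω : ‖ω‖ = 1) (x : Evec n) :
    ∃ u : Evec n, ‖u‖ = 1 ∧ ⟪u, ω⟫ = 0 ∧ 0 ≤ ⟪u, x⟫ := by
  have hωω : ⟪ω, ω⟫ = (1:ℝ) := by
    rw [real_inner_self_eq_norm_sq, hω]; norm_num
  obtain ⟨c, hc0, hcω⟩ : ∃ c : Evec n, c ≠ 0 ∧ ⟪c, ω⟫ = 0 := by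
    set i0 : Fin n := ⟨0, by omega⟩
    set i1 : Fin n := ⟨1, by omega⟩
    set e0 : Evec n := EuclideanSpace.single i0 1
    set e1 : Evec n := EuclideanSpace.single i1 1
    have he0 : ‖e0‖ = 1 := by simp [e0, EuclideanSpace.norm_single]
    have he1 : ‖e1‖ = 1 := by simp [e1, EuclideanSpace.norm_single]
    have he01 : ⟪e0, e1⟫ = (0:ℝ) := by
      rw [EuclideanSpace.inner_single_left]
      simp [e1, EuclideanSpace.single_apply]
      intro h
      exact absurd (congrArg Fin.val h) (by simp [i0, i1])
    by_cases h0 : e0 - ⟪ω, e0⟫ • ω = 0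
    · refine ⟨e1 - ⟪ω, e1⟫ • ω, ?_, ?_⟩
      · intro h1
        obtain ⟨A, he0'⟩ : ∃ A : ℝ, e0 = A • ω := ⟨⟪ω, e0⟫, (sub_eq_zero.mp h0)⟩
        obtain ⟨B, he1'⟩ : ∃ B : ℝ, e1 = B • ω := ⟨⟪ω, e1⟫, (sub_eq_zero.mp h1)⟩
        have hinner : ⟪e0, e1⟫ = A * B := by
          rw [he0', he1', real_inner_smul_left, real_inner_smul_right, hωω]
          ring
        have ha : |A| = 1 := by
          have h' : ‖e0‖ = |A| * ‖ω‖ := by rw [he0', norm_smul, Real.norm_eq_abs]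
          rw [he0, hω, mul_one] at h'
          exact h'.symm
        have hb : |B| = 1 := by
          have h' : ‖e1‖ = |B| * ‖ω‖ := by rw [he1', norm_smul, Real.norm_eq_abs]
          rw [he1, hω, mul_one] at h'
          exact h'.symm
        rw [he01] at hinner
        have habs := abs_eq_zero.mpr hinner.symm
        rw [abs_mul, ha, hb] at habs
        norm_num at habs
      · rw [inner_sub_left, real_inner_smul_left, hωω, real_inner_comm e1 ω]
        ring
    · refine ⟨e0 - ⟪ω, e0⟫ • ω, h0, ?_⟩
      rw [inner_sub_left, real_inner_smul_left, hωω, real_inner_comm e0 ω]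
      ring
  have hcn : (0:ℝ) < ‖c‖ := norm_pos_iff.mpr hc0
  set u' : Evec n := ‖c‖⁻¹ • c with hu'
  have hu'n : ‖u'‖ = 1 := by
    rw [hu', norm_smul, norm_inv, norm_norm, inv_mul_cancel₀ (ne_of_gt hcn)]
  have hu'ω : ⟪u', ω⟫ = 0 := by
    rw [hu', real_inner_smul_left, hcω, mul_zero]
  by_cases hsign : 0 ≤ ⟪u', x⟫
  · exact ⟨u', hu'n, hu'ω, hsign⟩
  · refine ⟨-u', by rwa [norm_neg], by rw [inner_neg_left, hu'ω, neg_zero], ?_⟩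
    rw [inner_neg_left]
    linarith

end AuxSeg
section AuxDetour

variable {M : LorentzMetric n} {O : TimeOrientation M}

/-- From a point on the unit cylinder with enough time budget, one can reach the plane
`{t = σ, x·ω = 1}` at a point of norm ≤ 5 by a causal curve avoiding the unit ball. -/
theorem detour (h11 : Cond11 M O) (hn : 2 ≤ n) {ω : Evec n} (hω : ‖ω‖ = 1) {σ : ℝ}
    (f : Vec n) (hf : ‖f.2‖ = 1) (hT : 2 * Real.pi ≤ σ - f.1) :
    ∃ w : Vec n, w.1 = σ ∧ ⟪w.2, ω⟫ = 1 ∧ ‖w.2‖ ≤ 5 ∧ CausalLE M O f w := by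
  obtain ⟨u, hu1, huω, huf⟩ := exists_unit_orth hn hω f.2
  have hπ : (3:ℝ) < Real.pi := Real.pi_gt_three
  set T : ℝ := σ - f.1 with hTdef
  have hT6 : 6 < T := by linarith
  set mid : Vec n := (f.1 + T / 2, f.2 + (2:ℝ) • u) with hmid
  have hmf : ⟪f.2, u⟫ = ⟪u, f.2⟫ := real_inner_comm _ _
  have hmidω : ⟪mid.2, ω⟫ = ⟪f.2, ω⟫ := by
    show ⟪f.2 + (2:ℝ) • u, ω⟫ = ⟪f.2, ω⟫
    rw [inner_add_left, real_inner_smul_left, huω]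
    ring
  set w : Vec n := (σ, mid.2 + (1 - ⟪mid.2, ω⟫) • ω) with hw
  have hfω : |⟪f.2, ω⟫| ≤ 1 := by
    have := abs_real_inner_le_norm f.2 ω
    rw [hf, hω] at this
    simpa using this
  -- step 1 : f to mid
  have step1 : CausalLE M O f mid := by
    apply causalLE_segment h11
    · show f.1 < f.1 + T / 2
      linarith
    · show ‖mid.2 - f.2‖ ≤ (f.1 + T / 2) - f.1
      have : mid.2 - f.2 = (2:ℝ) • u := by
        show (f.2 + (2:ℝ) • u) - f.2 = (2:ℝ) • u
        abel
      rw [this, norm_smul, hu1]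
      simp only [Real.norm_ofNat, mul_one]
      linarith
    · intro r hr
      have e : mid.2 - f.2 = (2:ℝ) • u := by
        show (f.2 + (2:ℝ) • u) - f.2 = (2:ℝ) • u
        abel
      rw [e, smul_smul]
      have hsq : ‖f.2 + (r * 2) • u‖ ^ 2 = 1 + 2 * (r * 2) * ⟪u, f.2⟫ + (r * 2) ^ 2 := by
        rw [norm_add_sq_real, hf, real_inner_smul_right, norm_smul, hu1, hmf]
        rw [Real.norm_eq_abs, abs_of_nonneg (by linarith [hr.1] : (0:ℝ) ≤ r * 2)]
        ring
      have h1 : 1 ≤ ‖f.2 + (r * 2) • u‖ ^ 2 := by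
        rw [hsq]
        nlinarith [hr.1, huf]
      nlinarith [norm_nonneg (f.2 + (r * 2) • u)]
  -- step 2 : mid to w
  have step2 : CausalLE M O mid w := by
    apply causalLE_segment h11
    · show f.1 + T / 2 < σ
      linarith
    · show ‖w.2 - mid.2‖ ≤ σ - (f.1 + T / 2)
      have e : w.2 - mid.2 = (1 - ⟪mid.2, ω⟫) • ω := by
        show (mid.2 + (1 - ⟪mid.2, ω⟫) • ω) - mid.2 = (1 - ⟪mid.2, ω⟫) • ω
        abel
      rw [e, norm_smul, hω, mul_one, Real.norm_eq_abs, hmidω]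
      have : |1 - ⟪f.2, ω⟫| ≤ 2 := by
        rw [abs_le] at hfω ⊢
        constructor <;> linarith [hfω.1, hfω.2]
      linarith
    · intro r hr
      have e : w.2 - mid.2 = (1 - ⟪mid.2, ω⟫) • ω := by
        show (mid.2 + (1 - ⟪mid.2, ω⟫) • ω) - mid.2 = (1 - ⟪mid.2, ω⟫) • ω
        abel
      rw [e]
      have hωu : ⟪ω, u⟫ = (0:ℝ) := by rw [real_inner_comm]; exact huω
      have hin : ⟪mid.2 + r • (1 - ⟪mid.2, ω⟫) • ω, u⟫ = ⟪u, f.2⟫ + 2 := by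
        rw [inner_add_left, real_inner_smul_left, real_inner_smul_left, hωu]
        have hm2 : ⟪mid.2, u⟫ = ⟪u, f.2⟫ + 2 := by
          show ⟪f.2 + (2:ℝ) • u, u⟫ = ⟪u, f.2⟫ + 2
          rw [inner_add_left, real_inner_smul_left, real_inner_self_eq_norm_sq, hu1, hmf]
          ring
        rw [hm2]
        ring
      have hle : ⟪mid.2 + r • (1 - ⟪mid.2, ω⟫) • ω, u⟫ ≤ ‖mid.2 + r • (1 - ⟪mid.2, ω⟫) • ω‖ := by
        calc ⟪mid.2 + r • (1 - ⟪mid.2, ω⟫) • ω, u⟫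
            ≤ ‖mid.2 + r • (1 - ⟪mid.2, ω⟫) • ω‖ * ‖u‖ := real_inner_le_norm _ _
        _ = ‖mid.2 + r • (1 - ⟪mid.2, ω⟫) • ω‖ := by rw [hu1, mul_one]
      rw [hin] at hle
      linarith [huf]
  refine ⟨w, rfl, ?_, ?_, causalLE_trans step1 step2⟩
  · show ⟪mid.2 + (1 - ⟪mid.2, ω⟫) • ω, ω⟫ = 1
    rw [inner_add_left, real_inner_smul_left, real_inner_self_eq_norm_sq, hω]
    ring
  · show ‖mid.2 + (1 - ⟪mid.2, ω⟫) • ω‖ ≤ 5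
    have h1 : ‖mid.2‖ ≤ 3 := by
      show ‖f.2 + (2:ℝ) • u‖ ≤ 3
      calc ‖f.2 + (2:ℝ) • u‖ ≤ ‖f.2‖ + ‖(2:ℝ) • u‖ := norm_add_le _ _
      _ = 1 + 2 := by
          rw [hf, norm_smul, hu1]
          simp
      _ = 3 := by norm_num
    have h2 : ‖(1 - ⟪mid.2, ω⟫) • ω‖ ≤ 2 := by
      rw [norm_smul, hω, mul_one, Real.norm_eq_abs, hmidω]
      rw [abs_le] at hfω ⊢
      constructor <;> linarith [hfω.1, hfω.2]
    calc ‖mid.2 + (1 - ⟪mid.2, ω⟫) • ω‖ ≤ ‖mid.2‖ + ‖(1 - ⟪mid.2, ω⟫) • ω‖ := norm_add_le _ _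
    _ ≤ 3 + 2 := add_le_add h1 h2
    _ = 5 := by norm_num

end AuxDetour
section AuxExit

variable {γ : ℝ → Vec n} {a b : ℝ}

theorem isClosed_ball_cond : IsClosed {v : Vec n | ‖v.2‖ ≤ 1} :=
  isClosed_le (continuous_snd.norm) continuous_const

/-- Last exit time from the unit cylinder. -/
theorem exit_point (hcont : ContinuousOn γ (Icc a b)) (hab : a ≤ b)
    (hS : ∃ r ∈ Icc a b, ‖(γ r).2‖ ≤ 1) (hb : 1 < ‖(γ b).2‖) :
    ∃ m ∈ Ico a b, ‖(γ m).2‖ = 1 ∧ ∀ r ∈ Icc m b, 1 ≤ ‖(γ r).2‖ := by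
  set S : Set ℝ := Icc a b ∩ γ ⁻¹' {v : Vec n | ‖v.2‖ ≤ 1} with hSdef
  have hclosed : IsClosed S := hcont.preimage_isClosed_of_isClosed isClosed_Icc isClosed_ball_cond
  have hne : S.Nonempty := by
    obtain ⟨r, hr, hr1⟩ := hS
    exact ⟨r, hr, hr1⟩
  have hbdd : BddAbove S := (bddAbove_Icc (a := a) (b := b)).mono inter_subset_left
  set m := sSup S with hm
  have hmS : m ∈ S := hclosed.csSup_mem hne hbdd
  obtain ⟨hmIcc, hm1⟩ := hmS
  have hmle : ‖(γ m).2‖ ≤ 1 := hm1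
  have hmb : m ≠ b := by
    intro h
    rw [h] at hmle
    linarith
  have hmb' : m < b := lt_of_le_of_ne hmIcc.2 hmb
  have hgt : ∀ r ∈ Ioc m b, 1 < ‖(γ r).2‖ := by
    intro r hr
    by_contra hc
    push_neg at hc
    have hrS : r ∈ S := ⟨⟨le_trans hmIcc.1 (le_of_lt hr.1), hr.2⟩, hc⟩
    have := le_csSup hbdd hrS
    linarith [hr.1]
  have hge : 1 ≤ ‖(γ m).2‖ := by
    have hNB : (nhdsWithin m (Ioc m b)).NeBot := by
      rw [← mem_closure_iff_nhdsWithin_neBot, closure_Ioc (ne_of_lt hmb')]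
      exact ⟨le_rfl, le_of_lt hmb'⟩
    have hcw : ContinuousWithinAt γ (Ioc m b) m :=
      (hcont m hmIcc).mono (fun r hr => ⟨le_trans hmIcc.1 (le_of_lt hr.1), hr.2⟩)
    have hT : Tendsto (fun r => ‖(γ r).2‖) (nhdsWithin m (Ioc m b)) (nhds ‖(γ m).2‖) :=
      ((continuous_snd.norm).continuousAt.tendsto).comp hcw
    refine ge_of_tendsto hT ?_
    filter_upwards [self_mem_nhdsWithin] with r hr
    exact le_of_lt (hgt r hr)
  refine ⟨m, ⟨hmIcc.1, hmb'⟩, le_antisymm hmle hge, ?_⟩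
  intro r hr
  rcases eq_or_lt_of_le hr.1 with rfl | h'
  · exact hge
  · exact le_of_lt (hgt r ⟨h', hr.2⟩)

/-- First entry time into the unit cylinder. -/
theorem entry_point (hcont : ContinuousOn γ (Icc a b)) (hab : a ≤ b)
    (hS : ∃ r ∈ Icc a b, ‖(γ r).2‖ ≤ 1) (ha : 1 ≤ ‖(γ a).2‖) :
    ∃ m ∈ Icc a b, ‖(γ m).2‖ = 1 ∧ ∀ r ∈ Icc a m, 1 ≤ ‖(γ r).2‖ := by
  set S : Set ℝ := Icc a b ∩ γ ⁻¹' {v : Vec n | ‖v.2‖ ≤ 1} with hSdef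
  have hclosed : IsClosed S := hcont.preimage_isClosed_of_isClosed isClosed_Icc isClosed_ball_cond
  have hne : S.Nonempty := by
    obtain ⟨r, hr, hr1⟩ := hS
    exact ⟨r, hr, hr1⟩
  have hbdd : BddBelow S := (bddBelow_Icc (a := b) (b := a)).mono inter_subset_left
  set m := sInf S with hm
  have hmS : m ∈ S := hclosed.csInf_mem hne hbdd
  obtain ⟨hmIcc, hm1⟩ := hmS
  have hmle : ‖(γ m).2‖ ≤ 1 := hm1
  have hgt : ∀ r ∈ Ico a m, 1 < ‖(γ r).2‖ := by
    intro r hr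
    by_contra hc
    push_neg at hc
    have hrS : r ∈ S := ⟨⟨hr.1, le_trans (le_of_lt hr.2) hmIcc.2⟩, hc⟩
    have := csInf_le hbdd hrS
    linarith [hr.2]
  have hge : 1 ≤ ‖(γ m).2‖ := by
    rcases eq_or_lt_of_le hmIcc.1 with ham | ham
    · rw [← ham]; exact ha
    · have hNB : (nhdsWithin m (Ico a m)).NeBot := by
        rw [← mem_closure_iff_nhdsWithin_neBot, closure_Ico (ne_of_lt ham)]
        exact ⟨le_of_lt ham, le_rfl⟩
      have hcw : ContinuousWithinAt γ (Ico a m) m :=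
        (hcont m hmIcc).mono (fun r hr => ⟨hr.1, le_trans (le_of_lt hr.2) hmIcc.2⟩)
      have hT : Tendsto (fun r => ‖(γ r).2‖) (nhdsWithin m (Ico a m)) (nhds ‖(γ m).2‖) :=
        ((continuous_snd.norm).continuousAt.tendsto).comp hcw
      refine ge_of_tendsto hT ?_
      filter_upwards [self_mem_nhdsWithin] with r hr
      exact le_of_lt (hgt r hr)
  refine ⟨m, hmIcc, le_antisymm hmle hge, ?_⟩
  intro r hr
  rcases eq_or_lt_of_le hr.2 with rfl | h'
  · exact hge
  · exact le_of_lt (hgt r ⟨hr.1, h'⟩)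

end AuxExit

section AuxReach

variable {M : LorentzMetric n} {O : TimeOrientation M}

theorem reach_plane (h11 : Cond11 M O) (hn : 2 ≤ n) {ω : Evec n} (hω : ‖ω‖ = 1) {σ R : ℝ}
    (hR5 : 5 ≤ R) {q f : Vec n} (hqf : CausalLE M O q f) (hf1 : ‖f.2‖ = 1)
    (hT : 2 * Real.pi ≤ σ - f.1) :
    q ∈ Jminus M O (SigPlusAt ω σ ∩ {p : Vec n | ‖p.2‖ ≤ R}) := by
  obtain ⟨w, hw1, hw2, hw5, hfw⟩ := detour h11 hn hω f hf1 hT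
  exact ⟨w, ⟨⟨hw1, hw2⟩, le_trans hw5 hR5⟩, causalLE_trans hqf hfw⟩

end AuxReach

/-- Lemma 3.8: decomposition of the causal past of Σ_{+,σ} into a far Minkowski part and
a near part: J⁻(Σ_{+,σ}) = (J⁻_Min(A) ∖ 𝒞) ∪ J⁻(K). -/
theorem near_far_decomposition_of_past (n : ℕ) (hn : 2 ≤ n)
    (M : LorentzMetric n) (O : TimeOrientation M)
    (h11 : Cond11 M O) (hGH : CondGH M O)
    (ω : Evec n) (hω : ‖ω‖ = 1) (σ R : ℝ) (hR : 2 * Real.pi + 1 ≤ R) :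
    Jminus M O (SigPlusAt ω σ) =
      (JminusMin (SigPlusAt ω σ ∩ {p : Vec n | R ≤ ‖p.2‖}) \ {p : Vec n | ‖p.2‖ < 1})
        ∪ Jminus M O (SigPlusAt ω σ ∩ {p : Vec n | ‖p.2‖ ≤ R}) := by
  have hπ : (3:ℝ) < Real.pi := Real.pi_gt_three
  have hR5 : (5:ℝ) ≤ R := by linarith
  apply Set.eq_of_subset_of_subset
  · -- ⊆ : analyze a causal curve reaching Σ_{+,σ}
    rintro q ⟨p, hps, hle⟩
    obtain ⟨hp1, hp2⟩ := hps
    by_cases hpR : ‖p.2‖ ≤ R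
    · exact Or.inr ⟨p, ⟨⟨hp1, hp2⟩, hpR⟩, hle⟩
    · push_neg at hpR
      rcases hle with rfl | ⟨γ, a, b, hpw', ha, hb⟩
      · refine Or.inl ⟨⟨q, ⟨⟨hp1, hp2⟩, le_of_lt hpR⟩, Or.inl rfl⟩, ?_⟩
        simp only [mem_setOf_eq, not_lt]
        linarith
      · have hpw : PW (FutureDir M O) γ a b := pw_iff_piecewise.mp hpw'
        have hab : a < b := hpw.lt
        by_cases hall : ∀ r ∈ Icc a b, 1 ≤ ‖(γ r).2‖
        · refine Or.inl ⟨⟨p, ⟨⟨hp1, hp2⟩, le_of_lt hpR⟩, ?_⟩, ?_⟩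
          · refine causalLEMin_of_pw (hpw.dir_mono ?_) ha hb
            intro r hr v hv
            exact (futureDir_iff_min h11 (hall r hr) v).mp hv
          · simp only [mem_setOf_eq, not_lt]
            rw [← ha]
            exact hall a ⟨le_rfl, le_of_lt hab⟩
        · push_neg at hall
          obtain ⟨r₀, hr₀, hr₀lt⟩ := hall
          have hbig : 1 < ‖(γ b).2‖ := by rw [hb]; linarith
          obtain ⟨m, hmIco, hm1, hmall⟩ := exit_point hpw.continuousOn (le_of_lt hab)
            ⟨r₀, hr₀, le_of_lt hr₀lt⟩ hbig
          have hqm : CausalLE M O q (γ m) := by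
            rcases eq_or_lt_of_le hmIco.1 with ham | ham
            · rw [← ha, ham]
              exact Or.inl rfl
            · exact causalLE_of_pw (hpw.split_left ham (le_of_lt hmIco.2)) ha rfl
          have hpwmb : PW (fun _ v => MinFutureDir (n := n) v) γ m b := by
            refine (hpw.split_right hmIco.1 hmIco.2).dir_mono ?_
            intro r hr v hv
            exact (futureDir_iff_min h11 (hmall r hr) v).mp hv
          have hdisp := min_disp hpwmb
          have hbudget : 2 * Real.pi ≤ σ - (γ m).1 := by
            have h1 : ‖(γ b).2‖ - ‖(γ m).2‖ ≤ ‖(γ b).2 - (γ m).2‖ := norm_sub_norm_le _ _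
            have h2 : (γ b).1 = σ := by rw [hb, hp1]
            have h3 : ‖(γ b).2‖ = ‖p.2‖ := by rw [hb]
            linarith [hdisp, h1, hm1, hpR, hR]
          exact Or.inr (reach_plane h11 hn hω hR5 hqm hm1 hbudget)
  · -- ⊇
    rintro q (⟨⟨p, hpA, hle⟩, hqC⟩ | ⟨p, hpK, hle⟩)
    · obtain ⟨⟨hp1, hp2⟩, hpR⟩ := hpA
      have hpR' : R ≤ ‖p.2‖ := hpR
      have hq1 : 1 ≤ ‖q.2‖ := by simpa [not_lt] using hqC
      rcases hle with rfl | ⟨η, a, b, hpw', ha, hb⟩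
      · exact ⟨q, ⟨hp1, hp2⟩, Or.inl rfl⟩
      · have hpw : PW (fun _ v => MinFutureDir (n := n) v) η a b := pw_iff_piecewise.mp hpw'
        have hab : a < b := hpw.lt
        by_cases hall : ∀ r ∈ Icc a b, 1 ≤ ‖(η r).2‖
        · refine ⟨p, ⟨hp1, hp2⟩, causalLE_of_pw (hpw.dir_mono ?_) ha hb⟩
          intro r hr v hv
          exact (futureDir_iff_min h11 (hall r hr) v).mpr hv
        · push_neg at hall
          obtain ⟨r₀, hr₀, hr₀lt⟩ := hall
          have haq : 1 ≤ ‖(η a).2‖ := by rw [ha]; exact hq1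
          obtain ⟨m, hmIcc, hm1, hmall⟩ := entry_point hpw.continuousOn (le_of_lt hab)
            ⟨r₀, hr₀, le_of_lt hr₀lt⟩ haq
          have hmb : m < b := by
            rcases eq_or_lt_of_le hmIcc.2 with hmb | hmb
            · exfalso
              rw [hmb, hb] at hm1
              linarith [hpR']
            · exact hmb
          have hqm : CausalLE M O q (η m) := by
            rcases eq_or_lt_of_le hmIcc.1 with ham | ham
            · rw [← ha, ham]
              exact Or.inl rfl
            · refine causalLE_of_pw ((hpw.split_left ham (le_of_lt hmb)).dir_mono ?_) ha rfl
              intro r hr v hv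
              exact (futureDir_iff_min h11 (hmall r hr) v).mpr hv
          have hdisp := min_disp (hpw.split_right hmIcc.1 hmb)
          have hbudget : 2 * Real.pi ≤ σ - (η m).1 := by
            have h1 : ‖(η b).2‖ - ‖(η m).2‖ ≤ ‖(η b).2 - (η m).2‖ := norm_sub_norm_le _ _
            have h2 : (η b).1 = σ := by rw [hb, hp1]
            have h3 : ‖(η b).2‖ = ‖p.2‖ := by rw [hb]
            linarith [hdisp, h1, hm1, hpR', hR]
          obtain ⟨w, hwmem, hwle⟩ := reach_plane h11 hn hω hR5 hqm hm1 hbudget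
          exact ⟨w, hwmem.1, hwle⟩
    · obtain ⟨hps, _⟩ := hpK
      exact ⟨p, hps, hle⟩

end
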